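/- arXiv:math/0002183 — 2 statements merged into one kernel-verified Lean document; each statement's English description precedes it below -/
import Mathlib

section
/- (Hedlund's Lemma) Let X be a second countable topological space and W a group of homeomorphisms of X. Let μ be a W-invariant W-ergodic Borel measure on X. Then for μ-almost every x ∈ X, the closure of the orbit Wx equals supp(μ). -/
open MeasureTheory Topology Set Filter Function
open scoped Manifold Pointwise

noncomputable section

/-- The `ℝ`-subalgebra of polynomial functions on the space of linear endomorphisms of `V`,
generated by the matrix-coefficient functions `A ↦ φ (A v)`. -/
def polyFunctions (V : Type*) [AddCommGroup V] [Module ℝ V] :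
    Subalgebra ℝ ((V →ₗ[ℝ] V) → ℝ) :=
  Algebra.adjoin ℝ {f | ∃ (v : V) (φ : V →ₗ[ℝ] ℝ), f = fun A => φ (A v)}

/-- Zariski closure of a set of linear endomorphisms of `V`. -/
def zcl {V : Type*} [AddCommGroup V] [Module ℝ V] (X : Set (V →ₗ[ℝ] V)) :
    Set (V →ₗ[ℝ] V) :=
  {A | ∀ f ∈ polyFunctions V, (∀ B ∈ X, f B = 0) → f A = 0}

/-- A linear endomorphism is unipotent if `A - id` is nilpotent. -/
def IsUnipotentLin {V : Type*} [AddCommGroup V] [Module ℝ V] (A : V →ₗ[ℝ] V) : Prop :=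
  IsNilpotent (A - LinearMap.id)

/-- Support of a Borel measure: the complement of the union of all open null sets. -/
def msupp {X : Type*} [TopologicalSpace X] [MeasurableSpace X] (μ : Measure X) : Set X :=
  (⋃₀ {U : Set X | IsOpen U ∧ μ U = 0})ᶜ

/-- A measure is invariant under every element of a set `S` of group elements. -/
def InvariantUnder {G : Type*} [Group G] (S : Set G) {X : Type*} [MulAction G X]
    [MeasurableSpace X] (μ : Measure X) : Prop :=
  ∀ g ∈ S, Measure.map (fun x => g • x) μ = μ

/-- A measure is ergodic under a set `S` of group elements: every `S`-invariant Borel set is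
null or conull. -/
def ErgodicUnder {G : Type*} [Group G] (S : Set G) {X : Type*} [MulAction G X]
    [MeasurableSpace X] (μ : Measure X) : Prop :=
  ∀ s : Set X, MeasurableSet s → (∀ g ∈ S, (fun x => g • x) ⁻¹' s = s) →
    μ s = 0 ∨ μ sᶜ = 0

/-- The orbit of a point `x` under a set `S` of group elements. -/
def orbitSet {G : Type*} [Group G] (S : Set G) {X : Type*} [MulAction G X] (x : X) : Set X :=
  (fun g => g • x) '' S

/-- The adjoint representation of a Lie group modelled on `E`: the differential at the
identity of the conjugation map `x ↦ g * x * g⁻¹`. -/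
def adRep {E : Type*} [NormedAddCommGroup E] [NormedSpace ℝ E]
    {G : Type*} [TopologicalSpace G] [ChartedSpace E G] [Group G] (g : G) :
    E →ₗ[ℝ] E :=
  (mfderiv 𝓘(ℝ, E) 𝓘(ℝ, E) (fun x => g * x * g⁻¹) (1 : G)).toLinearMap

/-- A one-parameter `Ad`-unipotent subgroup: a continuous homomorphism `φ : ℝ → G` all of
whose values are `Ad`-unipotent. -/
def IsOneParamUnipotent (E : Type*) [NormedAddCommGroup E] [NormedSpace ℝ E]
    {G : Type*} [TopologicalSpace G] [ChartedSpace E G] [Group G] (φ : ℝ → G) : Prop :=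
  Continuous φ ∧ (∀ s t : ℝ, φ (s + t) = φ s * φ t) ∧
    ∀ t : ℝ, IsUnipotentLin (adRep (E := E) (φ t))

/-- The Lie algebra of a subgroup `F` of a Lie group modelled on `E`: the span of the velocity
vectors at the identity of one-parameter subgroups contained in `F`. -/
def lieOf (E : Type*) [NormedAddCommGroup E] [NormedSpace ℝ E]
    {G : Type*} [TopologicalSpace G] [ChartedSpace E G] [Group G] (F : Subgroup G) :
    Submodule ℝ E :=
  Submodule.span ℝ {v : E | ∃ φ : ℝ → G, Continuous φ ∧ (∀ s t : ℝ, φ (s + t) = φ s * φ t) ∧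
    (∀ t : ℝ, φ t ∈ F) ∧ mfderiv 𝓘(ℝ, ℝ) 𝓘(ℝ, E) φ (0 : ℝ) (1 : ℝ) = v}

/-- `N¹_G(F)`: the set of elements of the normalizer of `F` whose adjoint action restricts to
the Lie algebra of `F` with determinant one. -/
def N1 (E : Type*) [NormedAddCommGroup E] [NormedSpace ℝ E]
    {G : Type*} [TopologicalSpace G] [ChartedSpace E G] [Group G] (F : Subgroup G) : Set G :=
  {g | g ∈ Subgroup.normalizer (F : Set G) ∧ ∃ A : lieOf E F →ₗ[ℝ] lieOf E F,
    (∀ v : lieOf E F, (A v : E) = adRep (E := E) g v) ∧ LinearMap.det A = 1}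

/-- A lattice: a discrete subgroup of finite covolume (there is a nonzero finite invariant
Borel measure on the quotient). -/
def IsLattice (G : Type*) [TopologicalSpace G] [Group G] (Γ : Subgroup G) : Prop :=
  DiscreteTopology Γ ∧
  letI : MeasurableSpace (G ⧸ Γ) := borel (G ⧸ Γ)
  ∃ μ : Measure (G ⧸ Γ), μ ≠ 0 ∧ IsFiniteMeasure μ ∧ InvariantUnder (univ : Set G) μ

/-- The homogeneous space `G ⧸ Γ` carries a nonzero finite `G`-invariant measure. -/
def HasFiniteInvariantMeasure {G : Type*} [Group G] (Γ : Subgroup G)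
    [MeasurableSpace (G ⧸ Γ)] : Prop :=
  ∃ ν : Measure (G ⧸ Γ), ν ≠ 0 ∧ IsFiniteMeasure ν ∧ InvariantUnder (univ : Set G) ν

/-- The identity component of a subgroup `H`, as a subgroup of `G`. -/
def compOf {G : Type*} [TopologicalSpace G] [Group G] [IsTopologicalGroup G] (H : Subgroup G) :
    Subgroup G :=
  (Subgroup.connectedComponentOfOne ↥H).map H.subtype

/-- The collection `ℋ_u` of subgroups `H` of `G` such that `H = ⟨w⟩H⁰`, `H ∩ Γ` is a lattice
in `H`, and the closure of `⟨w⟩x₀` equals `Hx₀`, where `w = g⁻¹ug ∈ H` for some `g ∈ G⁰`. -/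
def HH {G : Type*} [TopologicalSpace G] [Group G] [IsTopologicalGroup G]
    (Γ : Subgroup G) (u : G) : Set (Subgroup G) :=
  {H | ∃ g ∈ Subgroup.connectedComponentOfOne G, g⁻¹ * u * g ∈ H ∧
    (H : Set G) = (Subgroup.zpowers (g⁻¹ * u * g) : Set G) * ((compOf H : Subgroup G) : Set G) ∧
    IsLattice ↥H (Γ.subgroupOf H) ∧
    closure (orbitSet ((Subgroup.zpowers (g⁻¹ * u * g) : Subgroup G) : Set G)
        (QuotientGroup.mk (1 : G) : G ⧸ Γ)) =
      orbitSet (H : Set G) (QuotientGroup.mk (1 : G) : G ⧸ Γ)}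

/-- `N(H,u) = {g ∈ G⁰ : ug ∈ gH}`. -/
def NSet {G : Type*} [TopologicalSpace G] [Group G] [IsTopologicalGroup G]
    (H : Subgroup G) (u : G) : Set G :=
  {g | g ∈ Subgroup.connectedComponentOfOne G ∧ g⁻¹ * u * g ∈ H}

/-- `S(H,u) = ⋃_{F < H} N(F,u)`, the union over `F ∈ ℋ_u` with `F ⊆ H` and `π(F) ≠ π(H)`. -/
def SingularSet {G : Type*} [TopologicalSpace G] [Group G] [IsTopologicalGroup G]
    (Γ : Subgroup G) (H : Subgroup G) (u : G) : Set G :=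
  ⋃ F ∈ {F : Subgroup G | F ∈ HH Γ u ∧ F ≤ H ∧
    (QuotientGroup.mk '' (F : Set G) : Set (G ⧸ Γ)) ≠ QuotientGroup.mk '' (H : Set G)},
    NSet F u

/-- `N*(H,u) = N(H,u) \ S(H,u)`. -/
def NStar {G : Type*} [TopologicalSpace G] [Group G] [IsTopologicalGroup G]
    (Γ : Subgroup G) (H : Subgroup G) (u : G) : Set G :=
  NSet H u \ SingularSet Γ H u

/-- `λ_H`: an `H`-invariant Borel probability measure concentrated on the orbit `H·x₀`. -/
def IsCanonicalMeasure {G : Type*} [TopologicalSpace G] [Group G]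
    (Γ : Subgroup G) [MeasurableSpace (G ⧸ Γ)] (H : Subgroup G)
    (lamH : Measure (G ⧸ Γ)) : Prop :=
  IsProbabilityMeasure lamH ∧ InvariantUnder (H : Set G) lamH ∧
    lamH (orbitSet (H : Set G) (QuotientGroup.mk (1 : G) : G ⧸ Γ))ᶜ = 0


/-- The group of self-homeomorphisms of `X`, under composition. -/
instance homeomorphGroup {X : Type*} [TopologicalSpace X] : Group (X ≃ₜ X) where
  mul f g := g.trans f
  one := Homeomorph.refl X
  inv f := f.symm
  mul_assoc f g h := Homeomorph.ext fun _ => rfl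
  one_mul f := Homeomorph.ext fun _ => rfl
  mul_one f := Homeomorph.ext fun _ => rfl
  inv_mul_cancel f := Homeomorph.ext fun x => f.symm_apply_apply x

/-!
The support is closed and, by second countability, conull; and a measure-preserving
homeomorphism maps it into itself, so a.e. orbit closure is contained in it. Conversely, for
an open set `U` of positive measure, the set of points whose `W`-orbit meets `U` is open,
`W`-invariant and contains `U`, so by ergodicity it is conull. Intersecting over the countably
many basic open sets of positive measure, a.e. orbit meets each of them and hence is dense in
the support.
-/

namespace MeasureTheory.Measure

variable {X : Type*} [TopologicalSpace X] [MeasurableSpace X]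

theorem msupp_eq_support (μ : Measure X) : msupp μ = μ.support := by
  rw [msupp, ← compl_support_eq_sUnion, compl_compl]

theorem mapsTo_support_map [OpensMeasurableSpace X] {Y : Type*} [TopologicalSpace Y]
    [MeasurableSpace Y] [BorelSpace Y] {f : X → Y} (hf : Continuous f)
    (μ : Measure X) : MapsTo f μ.support (μ.map f).support := by
  intro x hx
  rw [support_eq_forall_isOpen] at hx ⊢
  intro U hfxU hU
  rw [map_apply hf.measurable hU.measurableSet]
  exact hx _ hfxU (hU.preimage hf)

theorem support_subset_closure_of_isTopologicalBasis {B : Set (Set X)}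
    (hB : TopologicalSpace.IsTopologicalBasis B) {μ : Measure X} {s : Set X}
    (hs : ∀ U ∈ B, μ U ≠ 0 → (U ∩ s).Nonempty) : μ.support ⊆ closure s := by
  intro y hy
  rw [support_eq_forall_isOpen] at hy
  refine mem_closure_iff.2 fun V hV hyV => ?_
  obtain ⟨U, hUB, hyU, hUV⟩ := hB.exists_subset_of_mem_open hyV hV
  exact (hs U hUB (hy U hyU (hB.isOpen hUB)).ne').mono (inter_subset_inter_left s hUV)

end MeasureTheory.Measure

namespace Homeomorph

variable {X : Type*} [TopologicalSpace X]

theorem image_apply_apply_of_mem {W : Subgroup (X ≃ₜ X)} {g : X ≃ₜ X} (hg : g ∈ W)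
    (x : X) : (fun h : X ≃ₜ X => h (g x)) '' W = (fun h : X ≃ₜ X => h x) '' W := by
  ext y
  constructor
  · rintro ⟨h, hh, rfl⟩
    exact ⟨h * g, W.mul_mem hh hg, rfl⟩
  · rintro ⟨h, hh, rfl⟩
    exact ⟨h * g⁻¹, W.mul_mem hh (W.inv_mem hg), congrArg h (g.symm_apply_apply x)⟩

theorem isOpen_setOf_inter_image_apply_nonempty {W : Subgroup (X ≃ₜ X)} {U : Set X}
    (hU : IsOpen U) : IsOpen {x | (U ∩ (fun h : X ≃ₜ X => h x) '' W).Nonempty} := by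
  have : {x | (U ∩ (fun h : X ≃ₜ X => h x) '' W).Nonempty} = ⋃ h ∈ W, (h : X → X) ⁻¹' U := by
    ext x
    simp only [mem_ofPred_eq, mem_iUnion, mem_preimage, inter_nonempty, mem_image,
      SetLike.mem_coe, exists_prop]
    constructor
    · rintro ⟨_, hy, h, hh, rfl⟩
      exact ⟨h, hh, hy⟩
    · rintro ⟨h, hh, hx⟩
      exact ⟨h x, hx, h, hh, rfl⟩
  rw [this]
  exact isOpen_biUnion fun h _ => hU.preimage h.continuous

variable [MeasurableSpace X] [OpensMeasurableSpace X]

theorem ae_inter_image_apply_nonempty (W : Subgroup (X ≃ₜ X)) {μ : Measure X}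
    (herg : ∀ s : Set X, MeasurableSet s → (∀ h ∈ W, (h : X → X) ⁻¹' s = s) →
      μ s = 0 ∨ μ sᶜ = 0)
    {U : Set X} (hU : IsOpen U) (hμU : μ U ≠ 0) :
    ∀ᵐ x ∂μ, (U ∩ (fun h : X ≃ₜ X => h x) '' W).Nonempty := by
  set s := {x | (U ∩ (fun h : X ≃ₜ X => h x) '' W).Nonempty}
  have hUs : U ⊆ s := fun x hx => ⟨x, hx, 1, W.one_mem, rfl⟩
  have hs_inv : ∀ g ∈ W, (g : X → X) ⁻¹' s = s := fun g hg => by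
    ext x
    simp only [s, mem_preimage, mem_ofPred_eq, image_apply_apply_of_mem hg]
  exact (herg s (isOpen_setOf_inter_image_apply_nonempty hU).measurableSet hs_inv).resolve_left
    fun hs => hμU (measure_mono_null hUs hs)

end Homeomorph

theorem hedlund_lemma {X : Type*} [TopologicalSpace X] [SecondCountableTopology X]
    [MeasurableSpace X] [BorelSpace X]
    (W : Subgroup (X ≃ₜ X)) (μ : Measure X)
    (hinv : ∀ h ∈ W, Measure.map (h : X → X) μ = μ)
    (herg : ∀ s : Set X, MeasurableSet s → (∀ h ∈ W, (h : X → X) ⁻¹' s = s) →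
      μ s = 0 ∨ μ sᶜ = 0) :
    ∀ᵐ x ∂μ, closure ((fun h : X ≃ₜ X => h x) '' (W : Set (X ≃ₜ X))) = msupp μ := by
  obtain ⟨B, hBc, -, hB⟩ := TopologicalSpace.exists_countable_basis X
  have hmeets : ∀ᵐ x ∂μ, ∀ U ∈ {U ∈ B | μ U ≠ 0},
      (U ∩ (fun h : X ≃ₜ X => h x) '' W).Nonempty :=
    (ae_ball_iff (hBc.mono (sep_subset B _))).2 fun U hU =>
      Homeomorph.ae_inter_image_apply_nonempty W herg (hB.isOpen hU.1) hU.2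
  filter_upwards [hmeets, Measure.support_mem_ae] with x hx hxμ
  rw [Measure.msupp_eq_support]
  refine (closure_minimal ?_ Measure.isClosed_support).antisymm
    (Measure.support_subset_closure_of_isTopologicalBasis hB fun U hU hμU => hx U ⟨hU, hμU⟩)
  rintro _ ⟨h, hh, rfl⟩
  simpa only [hinv h hh] using Measure.mapsTo_support_map h.continuous μ hxμ
end
end

section
/- Let G be a locally compact group, Λ a closed subgroup of G, and x₀ = eΛ ∈ G/Λ. Let Z be a closed subgroup of {g ∈ G : gΛg⁻¹ ⊆ Λ} such that the orbit Zx₀ is compact, and let ρ : G/Λ → G/ZΛ be the natural quotient map. Suppose H is a closed subgroup of G such that the orbit Hx₀ is open in its closure cl(Hx₀). Then ρ(cl(Hx₀) \ Hx₀) = cl(Hρ(x₀)) \ Hρ(x₀). In particular, if Hρ(x₀) is closed in G/ZΛ, then Hx₀ is closed in G/Λ. -/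
open MeasureTheory Topology Set Filter Function
open scoped Manifold Pointwise

noncomputable section

/-!
The closure `X` of `Hx₀` is `H`-invariant. For `z ∈ Z` the right translation `gΛ ↦ gzΛ` is well
defined and commutes with the action of `G`, so if `zx₀ ∈ X` it maps `X` into itself. Hence the
image of `{z ∈ Z : zx₀ ∈ X}` in `Z/(Z ∩ Λ)` is a closed subsemigroup; with the topology of the
orbit `Zx₀` this group is compact Hausdorff with separately continuous multiplication, so the
Ellis–Numakura lemma makes the subsemigroup a subgroup. Then `x₀ = (z⁻¹x₀)z` lies in the closure
of `Hzx₀`, and since `Hx₀` is open in `X`, `zx₀ ∈ Hx₀`. The fibres of `ρ` are the translates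
`gZx₀`, so this says `X ∩ ρ⁻¹(Hρ(x₀)) = Hx₀`; and `ρ` is a closed map because these fibres are
compact, so `ρ(X) = cl(Hρ(x₀))`.
-/

open QuotientGroup

theorem Set.image_diff_of_inter_preimage_image_subset {α β : Type*} {f : α → β} {s t : Set α}
    (h : s ∩ f ⁻¹' (f '' t) ⊆ t) : f '' (s \ t) = f '' s \ f '' t := by
  ext y
  constructor
  · rintro ⟨x, ⟨hxs, hxt⟩, rfl⟩
    exact ⟨mem_image_of_mem f hxs, fun hy => hxt (h ⟨hxs, hy⟩)⟩
  · rintro ⟨⟨x, hxs, rfl⟩, hy⟩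
    exact ⟨x, ⟨hxs, fun hxt => hy (mem_image_of_mem f hxt)⟩, rfl⟩

section SemitopologicalGroup

variable {Q : Type*} [Group Q] [TopologicalSpace Q] [SeparatelyContinuousMul Q]

theorem mul_mem_closure_range_pow_succ {q a b : Q}
    (ha : a ∈ closure (range fun n : ℕ => q ^ (n + 1)))
    (hb : b ∈ closure (range fun n : ℕ => q ^ (n + 1))) :
    a * b ∈ closure (range fun n : ℕ => q ^ (n + 1)) := by
  set P := range fun n : ℕ => q ^ (n + 1)
  have hPb : ∀ c ∈ P, c * b ∈ closure P := by
    rintro _ ⟨m, rfl⟩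
    refine map_mem_closure (continuous_const_mul _) hb ?_
    rintro _ ⟨n, rfl⟩
    exact ⟨m + n + 1, by rw [← pow_add]; ring_nf⟩
  simpa only [closure_closure] using map_mem_closure (continuous_mul_const b) ha hPb

variable [T2Space Q] [CompactSpace Q]

theorem one_mem_closure_range_pow_succ (q : Q) :
    (1 : Q) ∈ closure (range fun n : ℕ => q ^ (n + 1)) := by
  obtain ⟨e, he, hee⟩ := exists_idempotent_in_compact_subsemigroup continuous_mul_const
    (closure (range fun n : ℕ => q ^ (n + 1))) ⟨q, subset_closure ⟨0, pow_one q⟩⟩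
    isClosed_closure.isCompact
    fun a ha b hb => mul_mem_closure_range_pow_succ ha hb
  rwa [mul_eq_left.mp hee] at he

theorem IsClosed.inv_mem_of_mul_mem {s : Set Q} (hs : IsClosed s)
    (hmul : ∀ a ∈ s, ∀ b ∈ s, a * b ∈ s) {q : Q} (hq : q ∈ s) : q⁻¹ ∈ s := by
  have hpow : ∀ n : ℕ, q ^ (n + 1) ∈ s := fun n => by
    induction n with
    | zero => simpa using hq
    | succ n ih => exact pow_succ q (n + 1) ▸ hmul _ ih _ hq
  have hone : (1 : Q) ∈ s :=
    closure_minimal (range_subset_iff.mpr hpow) hs (one_mem_closure_range_pow_succ q)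
  have hmaps : MapsTo (· * q⁻¹) (range fun n : ℕ => q ^ (n + 1)) s := by
    rintro _ ⟨n, rfl⟩
    simp only [pow_succ, mul_inv_cancel_right]
    cases n with
    | zero => rwa [pow_zero]
    | succ n => exact hpow n
  simpa [hs.closure_eq] using
    map_mem_closure (continuous_mul_const q⁻¹) (one_mem_closure_range_pow_succ q) hmaps

end SemitopologicalGroup

theorem inv_mem_of_injective_of_isCompact_range {Q Y : Type*} [Group Q] [TopologicalSpace Y]
    [T2Space Y] {ι : Q → Y} (hι : Injective ι) (hcpt : IsCompact (range ι))
    (hleft : ∀ a, ∃ f : Y → Y, Continuous f ∧ ∀ b, ι (a * b) = f (ι b))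
    (hright : ∀ a, ∃ f : Y → Y, Continuous f ∧ ∀ b, ι (b * a) = f (ι b))
    {s : Set Y} (hs : IsClosed s) (hmul : ∀ a b, ι a ∈ s → ι b ∈ s → ι (a * b) ∈ s)
    {q : Q} (hq : ι q ∈ s) : ι q⁻¹ ∈ s := by
  let : TopologicalSpace Q := .induced ι ‹_›
  have hemb : IsEmbedding ι := ⟨⟨rfl⟩, hι⟩
  have hcont : ∀ g : Q → Q, (∃ f : Y → Y, Continuous f ∧ ∀ b, ι (g b) = f (ι b)) →
      Continuous g := by
    rintro g ⟨f, hf, hfg⟩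
    exact hemb.continuous_iff.mpr
      (by simpa only [Function.comp_def, hfg] using hf.comp hemb.continuous)
  have : T2Space Q := hemb.t2Space
  have : CompactSpace Q := ⟨hemb.isCompact_iff.mpr (by rwa [image_univ])⟩
  have : SeparatelyContinuousMul Q := ⟨hcont _ (hleft _), hcont _ (hright _)⟩
  exact (hs.preimage hemb.continuous).inv_mem_of_mul_mem (fun a ha b hb => hmul a b ha hb) hq

theorem IsOpenMap.exists_isCompact_image_eq {X Y : Type*} [TopologicalSpace X]
    [TopologicalSpace Y] [WeaklyLocallyCompactSpace X] {f : X → Y} (hf : IsOpenMap f)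
    (hfc : Continuous f) {C : Set Y} (hC : IsCompact C) (hCc : IsClosed C) (hCf : C ⊆ range f) :
    ∃ K, IsCompact K ∧ f '' K = C := by
  choose K hK hKx using fun x : X => exists_compact_mem_nhds x
  obtain ⟨t, ht⟩ := hC.elim_finite_subcover (fun x => f '' interior (K x))
    (fun x => hf _ isOpen_interior) fun y hy => by
      obtain ⟨x, rfl⟩ := hCf hy
      exact mem_iUnion.mpr ⟨x, x, mem_interior_iff_mem_nhds.mpr (hKx x), rfl⟩
  refine ⟨(⋃ x ∈ t, K x) ∩ f ⁻¹' C,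
    (t.isCompact_biUnion fun x _ => hK x).inter_right (hCc.preimage hfc), ?_⟩
  rw [image_inter_preimage, inter_eq_right]
  refine ht.trans (iUnion₂_subset fun x hx => ?_)
  exact image_mono (interior_subset.trans (subset_biUnion_of_mem (u := K) hx))

section Orbit

variable {G α β : Type*} [Group G] [MulAction G α] {H : Subgroup G} {x y : α}

theorem smul_mem_orbitSet {h : G} (hh : h ∈ H) (hy : y ∈ orbitSet (H : Set G) x) :
    h • y ∈ orbitSet (H : Set G) x := by
  obtain ⟨g, hg, rfl⟩ := hy
  exact ⟨h * g, H.mul_mem hh hg, mul_smul h g x⟩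

theorem image_orbitSet [MulAction G β] {f : α → β} (hf : ∀ (g : G) x, f (g • x) = g • f x)
    (S : Set G) (x : α) : f '' orbitSet S x = orbitSet S (f x) := by
  simp only [orbitSet, image_image, hf]

variable [TopologicalSpace α] [ContinuousConstSMul G α]

theorem smul_mem_closure_orbitSet {h : G} (hh : h ∈ H)
    (hy : y ∈ closure (orbitSet (H : Set G) x)) : h • y ∈ closure (orbitSet (H : Set G) x) :=
  map_mem_closure (continuous_const_smul h) hy fun _ => smul_mem_orbitSet hh

theorem map_mem_closure_orbitSet {f : α → α} (hf : Continuous f)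
    (hfG : ∀ (g : G) x, f (g • x) = g • f x) (hfx : f x ∈ closure (orbitSet (H : Set G) x))
    (hy : y ∈ closure (orbitSet (H : Set G) x)) : f y ∈ closure (orbitSet (H : Set G) x) := by
  refine closure_closure (s := orbitSet (H : Set G) x) ▸ map_mem_closure hf hy ?_
  rintro _ ⟨g, hg, rfl⟩
  exact hfG g x ▸ smul_mem_closure_orbitSet hg hfx

theorem mem_orbitSet_of_mem_closure (hx : IsLocallyClosed (orbitSet (H : Set G) x))
    (hy : y ∈ closure (orbitSet (H : Set G) x)) (hxy : x ∈ closure (orbitSet (H : Set G) y)) :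
    y ∈ orbitSet (H : Set G) x := by
  obtain ⟨_, hcob, h, hh, rfl⟩ := mem_closure_iff.mp hxy _ hx.isOpen_coborder
    (subset_coborder ⟨1, H.one_mem, one_smul G x⟩)
  have hhy : h • y ∈ orbitSet (H : Set G) x := by
    by_contra hn
    exact hcob ⟨smul_mem_closure_orbitSet hh hy, hn⟩
  simpa using smul_mem_orbitSet (H.inv_mem hh) hhy

end Orbit

namespace QuotientGroup

variable {G : Type*} [Group G] {Λ : Subgroup G}

def rightMul {z : G} (hz : z ∈ Subgroup.normalizer (Λ : Set G)) (x : G ⧸ Λ) : G ⧸ Λ :=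
  (⟨MulOpposite.op z, hz⟩ : (Subgroup.normalizer (Λ : Set G)).op) • x

@[simp]
theorem rightMul_mk {z : G} (hz : z ∈ Subgroup.normalizer (Λ : Set G)) (g : G) :
    rightMul hz (g : G ⧸ Λ) = ((g * z : G) : G ⧸ Λ) :=
  rfl

theorem rightMul_smul {z : G} (hz : z ∈ Subgroup.normalizer (Λ : Set G)) (g : G) (x : G ⧸ Λ) :
    rightMul hz (g • x) = g • rightMul hz x := by
  induction x using QuotientGroup.induction_on with
  | H a => exact congrArg _ (mul_assoc g a z)

theorem quotientMapOfLE_smul {s t : Subgroup G} (h : s ≤ t) (g : G) (x : G ⧸ s) :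
    Subgroup.quotientMapOfLE h (g • x) = g • Subgroup.quotientMapOfLE h x := by
  induction x using QuotientGroup.induction_on with
  | H a => rfl

variable [TopologicalSpace G]

theorem continuous_quotientMapOfLE {s t : Subgroup G} (h : s ≤ t) :
    Continuous (Subgroup.quotientMapOfLE h) :=
  (isQuotientMap_mk s).continuous_iff.mpr continuous_mk

variable [IsTopologicalGroup G]

theorem continuous_rightMul {z : G} (hz : z ∈ Subgroup.normalizer (Λ : Set G)) :
    Continuous (rightMul hz) :=
  (isQuotientMap_mk Λ).continuous_iff.mpr (continuous_mk.comp (continuous_mul_const z))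

theorem isClosedMap_quotientMapOfLE [WeaklyLocallyCompactSpace G] {s t : Subgroup G}
    [T2Space (G ⧸ s)] (h : s ≤ t) (ht : IsCompact ((↑) '' (t : Set G) : Set (G ⧸ s))) :
    IsClosedMap (Subgroup.quotientMapOfLE h) := by
  -- `t ⊆ s K⁻¹` with `K` compact, so the preimage in `G` of the image of `F` is `π⁻¹(F) K⁻¹`.
  obtain ⟨K, hK, hKt⟩ := (QuotientGroup.isOpenMap_coe (N := s)).exists_isCompact_image_eq
    continuous_mk ht ht.isClosed (image_subset_range _ _)
  have hKsub : K ⊆ t := fun k hk => by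
    obtain ⟨g, hg, hgk⟩ := hKt ▸ mem_image_of_mem _ hk
    simpa using t.mul_mem hg (h (QuotientGroup.eq.mp hgk))
  have htK : (t : Set G) ⊆ s * K⁻¹ := fun g hg => by
    obtain ⟨k, hk, hkg⟩ := hKt.symm ▸ mem_image_of_mem _ (t.inv_mem hg)
    exact ⟨_, s.inv_mem (QuotientGroup.eq.mp hkg), k⁻¹, inv_mem_inv.mpr hk, by group⟩
  intro F hF
  rw [← (isQuotientMap_mk t).isClosed_preimage]
  convert (hF.preimage continuous_mk).mul_right_of_isCompact hK.inv using 1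
  ext g
  constructor
  · rintro ⟨x, hxF, hxg⟩
    induction x using QuotientGroup.induction_on with | H a => ?_
    obtain ⟨l, hl, k, hk, hlk⟩ := htK (QuotientGroup.eq.mp hxg)
    refine ⟨a * l, ?_, k, hk, ?_⟩
    · simpa [QuotientGroup.eq.mpr (by simpa using hl : a⁻¹ * (a * l) ∈ s)] using hxF
    · exact (mul_assoc a l k).trans (by rw [show l * k = a⁻¹ * g from hlk, mul_inv_cancel_left])
  · rintro ⟨a, ha, k, hk, rfl⟩
    refine ⟨a, ha, QuotientGroup.eq.mpr ?_⟩
    simpa using t.inv_mem (hKsub (Set.mem_inv.mp hk))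

variable {Z H : Subgroup G}

theorem mk_inv_mem_of_isClosed_of_mul_mem [T2Space (G ⧸ Λ)]
    (hZ : Z ≤ Subgroup.normalizer (Λ : Set G)) (hC : IsCompact ((↑) '' (Z : Set G) : Set (G ⧸ Λ)))
    {s : Set (G ⧸ Λ)} (hs : IsClosed s)
    (hmul : ∀ z ∈ Z, ∀ w ∈ Z, (z : G ⧸ Λ) ∈ s → (w : G ⧸ Λ) ∈ s → ((z * w : G) : G ⧸ Λ) ∈ s)
    {z : G} (hz : z ∈ Z) (hzs : (z : G ⧸ Λ) ∈ s) : ((z⁻¹ : G) : G ⧸ Λ) ∈ s := by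
  have : (Λ.subgroupOf Z).Normal :=
    ⟨fun n hn g => (Subgroup.mem_normalizer_iff.mp (hZ g.2) n).mp hn⟩
  -- `ι` identifies the group `Z ⧸ (Z ∩ Λ)` with the compact orbit `Zx₀`.
  let ι : Z ⧸ Λ.subgroupOf Z → G ⧸ Λ := fun q => q.liftOn' (fun a => ((a : G) : G ⧸ Λ))
    fun _ _ hab => QuotientGroup.eq.mpr (Subgroup.mem_subgroupOf.mp (leftRel_apply.mp hab))
  refine inv_mem_of_injective_of_isCompact_range (ι := ι) (q := (⟨z, hz⟩ : Z))
    ?_ ?_ ?_ ?_ hs ?_ hzs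
  · intro a b
    induction a using QuotientGroup.induction_on with | H a => ?_
    induction b using QuotientGroup.induction_on with | H b => ?_
    intro hab
    exact QuotientGroup.eq.mpr ((QuotientGroup.eq (s := Λ)).mp hab)
  · convert hC using 1
    ext x
    refine ⟨?_, fun ⟨a, ha, hax⟩ => ⟨((⟨a, ha⟩ : Z) : Z ⧸ Λ.subgroupOf Z), hax⟩⟩
    rintro ⟨q, rfl⟩
    induction q using QuotientGroup.induction_on with | H a => exact ⟨a, a.2, rfl⟩
  · intro a
    induction a using QuotientGroup.induction_on with | H a => ?_
    refine ⟨((a : G) • ·), continuous_const_smul _, fun b => ?_⟩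
    induction b using QuotientGroup.induction_on with | H b => rfl
  · intro a
    induction a using QuotientGroup.induction_on with | H a => ?_
    refine ⟨rightMul (hZ a.2), continuous_rightMul _, fun b => ?_⟩
    induction b using QuotientGroup.induction_on with | H b => rfl
  · intro a b
    induction a using QuotientGroup.induction_on with | H a => ?_
    induction b using QuotientGroup.induction_on with | H b => ?_
    exact hmul _ a.2 _ b.2

theorem mk_mem_orbitSet_of_mem_closure [T2Space (G ⧸ Λ)]
    (hZ : Z ≤ Subgroup.normalizer (Λ : Set G)) (hC : IsCompact ((↑) '' (Z : Set G) : Set (G ⧸ Λ)))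
    (hY : IsLocallyClosed (orbitSet (H : Set G) (mk 1 : G ⧸ Λ))) {z : G} (hz : z ∈ Z)
    (hzY : (z : G ⧸ Λ) ∈ closure (orbitSet (H : Set G) (mk 1 : G ⧸ Λ))) :
    (z : G ⧸ Λ) ∈ orbitSet (H : Set G) (mk 1 : G ⧸ Λ) := by
  have hinv : ((z⁻¹ : G) : G ⧸ Λ) ∈ closure (orbitSet (H : Set G) (mk 1 : G ⧸ Λ)) :=
    mk_inv_mem_of_isClosed_of_mul_mem hZ hC isClosed_closure (fun _ _ w hw hz' hw' =>
      map_mem_closure_orbitSet (continuous_rightMul (hZ hw)) (rightMul_smul _)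
        (by simpa using hw') hz') hz hzY
  refine mem_orbitSet_of_mem_closure hY hzY ?_
  have := map_mem_closure (continuous_rightMul (hZ hz)) hinv (mapsTo_image _ _)
  rwa [image_orbitSet (rightMul_smul _), rightMul_mk, rightMul_mk, inv_mul_cancel, one_mul] at this

theorem mem_orbitSet_of_quotientMapOfLE_mem [T2Space (G ⧸ Λ)]
    (hZ : Z ≤ Subgroup.normalizer (Λ : Set G)) (hC : IsCompact ((↑) '' (Z : Set G) : Set (G ⧸ Λ)))
    (hY : IsLocallyClosed (orbitSet (H : Set G) (mk 1 : G ⧸ Λ))) {p : G ⧸ Λ}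
    (hp : p ∈ closure (orbitSet (H : Set G) (mk 1 : G ⧸ Λ)))
    (hρp : Subgroup.quotientMapOfLE (le_sup_right : Λ ≤ Z ⊔ Λ) p ∈
      orbitSet (H : Set G) (mk 1 : G ⧸ (Z ⊔ Λ : Subgroup G))) :
    p ∈ orbitSet (H : Set G) (mk 1 : G ⧸ Λ) := by
  induction p using QuotientGroup.induction_on with | H g => ?_
  obtain ⟨h, hh, hhg⟩ := hρp
  obtain ⟨z, hz, l, hl, hzl : z * l = h⁻¹ * g⟩ : h⁻¹ * g ∈ (Z : Set G) * Λ := by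
    rw [← Subgroup.coe_mul_of_left_le_normalizer_right Z Λ hZ]
    exact QuotientGroup.eq.mp (by simpa using hhg)
  have hg : (g : G ⧸ Λ) = h • (z : G ⧸ Λ) := by
    refine QuotientGroup.eq.mpr (show g⁻¹ * (h * z) ∈ Λ from ?_)
    rw [show h * z = g * l⁻¹ by rw [eq_mul_inv_iff_mul_eq, mul_assoc, hzl, mul_inv_cancel_left]]
    simpa using Λ.inv_mem hl
  rw [hg] at hp ⊢
  refine smul_mem_orbitSet hh (mk_mem_orbitSet_of_mem_closure hZ hC hY hz ?_)
  simpa using smul_mem_closure_orbitSet (H.inv_mem hh) hp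

end QuotientGroup

theorem quotient_boundary_lemma_general
    {G : Type*} [TopologicalSpace G] [Group G] [IsTopologicalGroup G] [LocallyCompactSpace G]
    (Λ : Subgroup G) (hΛcl : IsClosed (Λ : Set G))
    (Z : Subgroup G)
    (hZnorm : ∀ z ∈ Z, ∀ l ∈ Λ, z * l * z⁻¹ ∈ Λ)
    (hZcpt : IsCompact (orbitSet (Z : Set G) (QuotientGroup.mk (1 : G) : G ⧸ Λ)))
    (ρ : (G ⧸ Λ) → (G ⧸ (Z ⊔ Λ : Subgroup G)))
    (hρ : ∀ g : G, ρ (QuotientGroup.mk g) = QuotientGroup.mk g)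
    (H : Subgroup G)
    (hopen : ∃ O : Set (G ⧸ Λ), IsOpen O ∧
      orbitSet (H : Set G) (QuotientGroup.mk (1 : G) : G ⧸ Λ) =
        O ∩ closure (orbitSet (H : Set G) (QuotientGroup.mk (1 : G) : G ⧸ Λ))) :
    ρ '' (closure (orbitSet (H : Set G) (QuotientGroup.mk (1 : G) : G ⧸ Λ)) \
        orbitSet (H : Set G) (QuotientGroup.mk (1 : G) : G ⧸ Λ)) =
      closure (orbitSet (H : Set G) (ρ (QuotientGroup.mk (1 : G)))) \
        orbitSet (H : Set G) (ρ (QuotientGroup.mk (1 : G))) ∧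
    (IsClosed (orbitSet (H : Set G) (ρ (QuotientGroup.mk (1 : G)))) →
      IsClosed (orbitSet (H : Set G) (QuotientGroup.mk (1 : G) : G ⧸ Λ))) := by
  have : IsClosed (Λ : Set G) := hΛcl
  have hZ : Z ≤ Subgroup.normalizer (Λ : Set G) := Subgroup.le_normalizer_iff.mpr hZnorm
  have hC : IsCompact ((↑) '' (Z : Set G) : Set (G ⧸ Λ)) := by simpa [orbitSet] using hZcpt
  have hCsup : IsCompact ((↑) '' ((Z ⊔ Λ : Subgroup G) : Set G) : Set (G ⧸ Λ)) := by
    rwa [Subgroup.coe_mul_of_left_le_normalizer_right Z Λ hZ, ← preimage_image_mk_eq_mul,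
      image_preimage_eq _ mk_surjective]
  have hρeq : ρ = Subgroup.quotientMapOfLE le_sup_right :=
    funext fun x => QuotientGroup.induction_on x hρ
  have hρG : ∀ (g : G) x, ρ (g • x) = g • ρ x := hρeq ▸ quotientMapOfLE_smul _
  set Y := orbitSet (H : Set G) (mk 1 : G ⧸ Λ)
  have hY : IsLocallyClosed Y := let ⟨O, hO, hYO⟩ := hopen; ⟨O, _, hO, isClosed_closure, hYO⟩
  rw [← image_orbitSet hρG]
  have hboundary : ρ '' (closure Y \ Y) = closure (ρ '' Y) \ ρ '' Y := by
    rw [image_diff_of_inter_preimage_image_subset, (hρeq ▸ isClosedMap_quotientMapOfLE _ hCsup :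
      IsClosedMap ρ).closure_image_eq_of_continuous (hρeq ▸ continuous_quotientMapOfLE _)]
    rintro p ⟨hp, hρp⟩
    rw [image_orbitSet hρG, hρ, hρeq] at hρp
    exact mem_orbitSet_of_quotientMapOfLE_mem hZ hC hY hp hρp
  refine ⟨hboundary, fun hW => isClosed_of_closure_subset (sdiff_eq_empty.mp ?_)⟩
  rw [← image_eq_empty, hboundary, hW.closure_eq, sdiff_self]

theorem quotient_boundary_lemma
    {G : Type*} [TopologicalSpace G] [Group G] [IsTopologicalGroup G] [LocallyCompactSpace G]
    (Λ : Subgroup G) (hΛcl : IsClosed (Λ : Set G))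
    (Z : Subgroup G) (hZcl : IsClosed (Z : Set G))
    (hZnorm : ∀ z ∈ Z, ∀ l ∈ Λ, z * l * z⁻¹ ∈ Λ)
    (hZcpt : IsCompact (orbitSet (Z : Set G) (QuotientGroup.mk (1 : G) : G ⧸ Λ)))
    (ρ : (G ⧸ Λ) → (G ⧸ (Z ⊔ Λ : Subgroup G)))
    (hρ : ∀ g : G, ρ (QuotientGroup.mk g) = QuotientGroup.mk g)
    (H : Subgroup G) (hHcl : IsClosed (H : Set G))
    (hopen : ∃ O : Set (G ⧸ Λ), IsOpen O ∧
      orbitSet (H : Set G) (QuotientGroup.mk (1 : G) : G ⧸ Λ) =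
        O ∩ closure (orbitSet (H : Set G) (QuotientGroup.mk (1 : G) : G ⧸ Λ))) :
    ρ '' (closure (orbitSet (H : Set G) (QuotientGroup.mk (1 : G) : G ⧸ Λ)) \
        orbitSet (H : Set G) (QuotientGroup.mk (1 : G) : G ⧸ Λ)) =
      closure (orbitSet (H : Set G) (ρ (QuotientGroup.mk (1 : G)))) \
        orbitSet (H : Set G) (ρ (QuotientGroup.mk (1 : G))) ∧
    (IsClosed (orbitSet (H : Set G) (ρ (QuotientGroup.mk (1 : G)))) →
      IsClosed (orbitSet (H : Set G) (QuotientGroup.mk (1 : G) : G ⧸ Λ))) :=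
  quotient_boundary_lemma_general Λ hΛcl Z hZnorm hZcpt ρ hρ H hopen
end
end
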